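/- arXiv:0906.3100 — 5 statements merged into one kernel-verified Lean document; each statement's English description precedes it below -/
import Mathlib

section
/- If S ⊆ 𝔽₂ⁿ has |S| = σ·2ⁿ with 0 < σ < 1/2, φ : S → 𝔽₂^N is a Freiman homomorphism (i.e. φ(x₁)+φ(x₂) = φ(x₃)+φ(x₄) whenever x₁,x₂,x₃,x₄ ∈ S satisfy x₁+x₂ = x₃+x₄), and f : 𝔽₂^{n+N} → ℝ is defined by f(x,y) := 1_S(x)·(-1)^{φ(x)·y}, then ‖f‖_{U³(𝔽₂^{n+N})} ≥ σ. -/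
/-!
With `ψ` the nontrivial character of `𝔽₂`, `f (x, y) = 1_S(x) ψ(φ(x) ⬝ y)`. In each term of the
`U³` sum the phase is the alternating sum of `φ(x + ω⬝a) ⬝ (y + ω⬝b)` over the cube; expanding in
`y` and the `bᵢ`, it splits into alternating sums of `φ` over two-dimensional faces, which vanish
by the Freiman property as soon as all vertices lie in `S`. Hence `‖f‖_{U³} = ‖1_S‖_{U³}`, and two
Cauchy–Schwarz steps give `‖1_S‖_{U³}⁸ ≥ ‖1_S‖_{U²}⁸ ≥ (𝔼 1_S)⁸ = σ⁸`.
-/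

noncomputable def gowersU3 {G : Type*} [AddCommGroup G] [Fintype G] (f : G → ℂ) : ℝ :=
  ((∑ x : G, ∑ h₁ : G, ∑ h₂ : G, ∑ h₃ : G,
      f x * (starRingEnd ℂ) (f (x + h₁)) * (starRingEnd ℂ) (f (x + h₂)) *
        (starRingEnd ℂ) (f (x + h₃)) * f (x + h₁ + h₂) * f (x + h₁ + h₃) *
        f (x + h₂ + h₃) * (starRingEnd ℂ) (f (x + h₁ + h₂ + h₃))).re /
    (Fintype.card G : ℝ) ^ 4) ^ ((8 : ℝ)⁻¹)

open Finset Fintype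

section Gowers

variable {G : Type*} [AddCommGroup G] [Fintype G]

def gowersCube {R : Type*} [Mul R] [Star R] (f : G → R) (x h₁ h₂ h₃ : G) : R :=
  f x * star (f (x + h₁)) * star (f (x + h₂)) * star (f (x + h₃)) * f (x + h₁ + h₂) *
    f (x + h₁ + h₃) * f (x + h₂ + h₃) * star (f (x + h₁ + h₂ + h₃))

theorem gowersU3_eq_sum_gowersCube (f : G → ℂ) :
    gowersU3 f = ((∑ x, ∑ h₁, ∑ h₂, ∑ h₃, gowersCube f x h₁ h₂ h₃).re / card G ^ 4) ^ (8⁻¹ : ℝ) :=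
  rfl

theorem sum_sum_mul_add_eq_sq {R : Type*} [CommSemiring R] (F : G → R) :
    ∑ c, ∑ x, F x * F (x + c) = (∑ x, F x) ^ 2 := by
  rw [sq, Finset.sum_mul_sum, sum_comm]
  exact sum_congr rfl fun x _ ↦ Fintype.sum_equiv (Equiv.addLeft x) _ _ fun _ ↦ rfl

theorem sum_box_eq_sq (r : G → ℝ) (h₁ : G) :
    ∑ h₂, ∑ x, r x * r (x + h₁) * r (x + h₂) * r (x + h₁ + h₂) = (∑ x, r x * r (x + h₁)) ^ 2 := by
  rw [← sum_sum_mul_add_eq_sq]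
  refine sum_congr rfl fun h₂ _ ↦ sum_congr rfl fun x _ ↦ ?_
  rw [add_right_comm]
  ring

theorem sum_gowersCube_eq (r : G → ℝ) :
    ∑ x, ∑ h₁, ∑ h₂, ∑ h₃, gowersCube r x h₁ h₂ h₃ =
      ∑ h₁, ∑ h₂, (∑ x, r x * r (x + h₁) * r (x + h₂) * r (x + h₁ + h₂)) ^ 2 := by
  rw [sum_comm]; refine sum_congr rfl fun h₁ _ ↦ ?_
  rw [sum_comm]; refine sum_congr rfl fun h₂ _ ↦ ?_
  rw [sum_comm, ← sum_sum_mul_add_eq_sq]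
  refine sum_congr rfl fun h₃ _ ↦ sum_congr rfl fun x _ ↦ ?_
  simp only [gowersCube, star_trivial, add_right_comm _ h₃]
  ring

theorem sum_pow_eight_le_card_pow_four_mul_sum_gowersCube (r : G → ℝ) :
    (∑ x, r x) ^ 8 ≤ (card G : ℝ) ^ 4 * ∑ x, ∑ h₁, ∑ h₂, ∑ h₃, gowersCube r x h₁ h₂ h₃ := by
  set B := ∑ h₁, (∑ x, r x * r (x + h₁)) ^ 2
  have hA : ((∑ x, r x) ^ 2) ^ 2 ≤ card G * B := by
    rw [← sum_sum_mul_add_eq_sq]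
    exact sq_sum_le_card_mul_sum_sq
  have hB : B ^ 2 ≤ (card G : ℝ) ^ 2 *
      ∑ h₁, ∑ h₂, (∑ x, r x * r (x + h₁) * r (x + h₂) * r (x + h₁ + h₂)) ^ 2 := by
    have hB_eq : B = ∑ p : G × G, ∑ x, r x * r (x + p.1) * r (x + p.2) * r (x + p.1 + p.2) := by
      simp only [B, ← sum_box_eq_sq, Fintype.sum_prod_type]
    rw [hB_eq]
    refine sq_sum_le_card_mul_sum_sq.trans_eq ?_
    rw [card_univ, Fintype.card_prod, Fintype.sum_prod_type]
    push_cast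
    ring
  calc (∑ x, r x) ^ 8 = (((∑ x, r x) ^ 2) ^ 2) ^ 2 := by ring
    _ ≤ (card G * B) ^ 2 := pow_le_pow_left₀ (by positivity) hA 2
    _ = card G ^ 2 * B ^ 2 := by ring
    _ ≤ card G ^ 2 * (card G ^ 2 *
          ∑ h₁, ∑ h₂, (∑ x, r x * r (x + h₁) * r (x + h₂) * r (x + h₁ + h₂)) ^ 2) := by gcongr
    _ = _ := by rw [sum_gowersCube_eq]; ring

theorem gowersU3_ofReal (r : G → ℝ) :
    gowersU3 (fun x ↦ (r x : ℂ)) =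
      ((∑ x, ∑ h₁, ∑ h₂, ∑ h₃, gowersCube r x h₁ h₂ h₃) / card G ^ 4) ^ (8⁻¹ : ℝ) := by
  have hcube (x h₁ h₂ h₃ : G) :
      gowersCube (fun x ↦ (r x : ℂ)) x h₁ h₂ h₃ = gowersCube r x h₁ h₂ h₃ := by
    simp [gowersCube]
  simp only [gowersU3_eq_sum_gowersCube, hcube, ← Complex.ofReal_sum, Complex.ofReal_re]

theorem mean_le_gowersU3 (r : G → ℝ) : (∑ x, r x) / card G ≤ gowersU3 (fun x ↦ (r x : ℂ)) := by
  set m := (∑ x, r x) / card G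
  set Q := ∑ x, ∑ h₁, ∑ h₂, ∑ h₃, gowersCube r x h₁ h₂ h₃
  have hm : |m| ^ 8 ≤ Q / card G ^ 4 := by
    have hG : (0 : ℝ) < card G := by positivity
    rw [pow_abs, abs_of_nonneg (Even.pow_nonneg (by decide) _), div_pow,
      div_le_div_iff₀ (by positivity) (by positivity)]
    calc (∑ x, r x) ^ 8 * card G ^ 4 ≤ (card G ^ 4 * Q) * card G ^ 4 := by
          gcongr
          exact sum_pow_eight_le_card_pow_four_mul_sum_gowersCube r
      _ = Q * card G ^ 8 := by ring
  rw [gowersU3_ofReal]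
  calc m ≤ |m| := le_abs_self m
    _ = (|m| ^ 8) ^ ((8 : ℕ)⁻¹ : ℝ) := (Real.pow_rpow_inv_natCast (abs_nonneg m) (by norm_num)).symm
    _ ≤ _ := by
      push_cast
      exact Real.rpow_le_rpow (by positivity) hm (by norm_num)

end Gowers

theorem gowersU3_prod_eq {X Y : Type*} [AddCommGroup X] [Fintype X] [AddCommGroup Y] [Fintype Y]
    (f : X × Y → ℂ) (g : X → ℂ)
    (h : ∀ x y a₁ b₁ a₂ b₂ a₃ b₃,
      gowersCube f (x, y) (a₁, b₁) (a₂, b₂) (a₃, b₃) = gowersCube g x a₁ a₂ a₃) :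
    gowersU3 f = gowersU3 g := by
  have hsum : ∑ p, ∑ q₁, ∑ q₂, ∑ q₃, gowersCube f p q₁ q₂ q₃ =
      card Y ^ 4 * ∑ x, ∑ a₁, ∑ a₂, ∑ a₃, gowersCube g x a₁ a₂ a₃ := by
    simp only [Fintype.sum_prod_type, h, sum_const, card_univ, nsmul_eq_mul, ← mul_sum]
    ring
  rw [gowersU3_eq_sum_gowersCube, gowersU3_eq_sum_gowersCube, hsum, Fintype.card_prod]
  congr 1
  rw [← Complex.ofReal_natCast, ← Complex.ofReal_pow, Complex.re_ofReal_mul, Nat.cast_mul]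
  field_simp

theorem ZMod.stdAddChar_two_apply (z : ZMod 2) : (ZMod.stdAddChar z : ℂ) = (-1) ^ z.val := by
  rw [ZMod.stdAddChar_apply, ZMod.toCircle_apply, ← Complex.exp_pi_mul_I, ← Complex.exp_nat_mul]
  congr 1
  push_cast
  ring

section Freiman

variable {R X ι : Type*} [CommRing R] [AddCommGroup X] [Fintype ι]

theorem IsAddFreimanHom.alternating_cube_dotProduct_eq_zero {S : Set X} {φ : X → ι → R}
    (hφ : IsAddFreimanHom 2 S Set.univ φ)
    {x a₁ a₂ a₃ : X}
    (hS : ∀ p ∈ [x, x + a₁, x + a₂, x + a₃, x + a₁ + a₂, x + a₁ + a₃, x + a₂ + a₃, x + a₁ + a₂ + a₃],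
      p ∈ S)
    (y b₁ b₂ b₃ : ι → R) :
    φ x ⬝ᵥ y - φ (x + a₁) ⬝ᵥ (y + b₁) - φ (x + a₂) ⬝ᵥ (y + b₂) - φ (x + a₃) ⬝ᵥ (y + b₃) +
      φ (x + a₁ + a₂) ⬝ᵥ (y + b₁ + b₂) + φ (x + a₁ + a₃) ⬝ᵥ (y + b₁ + b₃) +
      φ (x + a₂ + a₃) ⬝ᵥ (y + b₂ + b₃) - φ (x + a₁ + a₂ + a₃) ⬝ᵥ (y + b₁ + b₂ + b₃) = 0 := by
  have face {p s q r : X} (hp : p ∈ S) (hs : s ∈ S) (hq : q ∈ S) (hr : r ∈ S) (h : p + s = q + r)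
      (z : ι → R) : φ p ⬝ᵥ z + φ s ⬝ᵥ z = φ q ⬝ᵥ z + φ r ⬝ᵥ z := by
    rw [← add_dotProduct, ← add_dotProduct, hφ.add_eq_add hp hs hq hr h]
  simp only [List.mem_cons, List.not_mem_nil, forall_eq_or_imp, or_false, forall_eq] at hS
  obtain ⟨h₀, h₁, h₂, h₃, h₁₂, h₁₃, h₂₃, h₁₂₃⟩ := hS
  simp only [dotProduct_add]
  -- The coefficient of `y` is the difference of the faces `ω₃ = 0` and `ω₃ = 1`;
  -- that of `bᵢ` is minus the face `ωᵢ = 1`.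
  linear_combination face h₀ h₁₂ h₁ h₂ (by abel) y - face h₃ h₁₂₃ h₁₃ h₂₃ (by abel) y -
    face h₁ h₁₂₃ h₁₂ h₁₃ (by abel) b₁ - face h₂ h₁₂₃ h₁₂ h₂₃ (by abel) b₂ -
    face h₃ h₁₂₃ h₁₃ h₂₃ (by abel) b₃

theorem IsAddFreimanHom.gowersCube_eq [Finite R] [DecidableEq X] {S : Finset X} {φ : X → ι → R}
    (hφ : IsAddFreimanHom 2 (S : Set X) Set.univ φ) (ψ : AddChar R ℂ) {f : X × (ι → R) → ℂ}
    (hf : ∀ x y, f (x, y) = if x ∈ S then ψ (φ x ⬝ᵥ y) else 0) (x : X) (y : ι → R)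
    (a₁ : X) (b₁ : ι → R) (a₂ : X) (b₂ : ι → R) (a₃ : X) (b₃ : ι → R) :
    gowersCube f (x, y) (a₁, b₁) (a₂, b₂) (a₃, b₃) =
      gowersCube (fun x ↦ ((if x ∈ S then 1 else 0 : ℝ) : ℂ)) x a₁ a₂ a₃ := by
  set ind : X → ℂ := fun x ↦ ((if x ∈ S then 1 else 0 : ℝ) : ℂ)
  have hf' (p : X × (ι → R)) : f p = ind p.1 * ψ (φ p.1 ⬝ᵥ p.2) := by
    obtain ⟨x, y⟩ := p
    rw [hf]; split_ifs <;> simp [ind, *]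
  have hind (x : X) : star (ind x) = ind x := by simp [ind]
  have hψ (t : R) : star (ψ t) = (ψ t)⁻¹ := (AddChar.inv_apply_eq_conj ψ t).symm
  have hcube : gowersCube f (x, y) (a₁, b₁) (a₂, b₂) (a₃, b₃) = gowersCube ind x a₁ a₂ a₃ *
      ψ (φ x ⬝ᵥ y - φ (x + a₁) ⬝ᵥ (y + b₁) - φ (x + a₂) ⬝ᵥ (y + b₂) - φ (x + a₃) ⬝ᵥ (y + b₃) +
        φ (x + a₁ + a₂) ⬝ᵥ (y + b₁ + b₂) + φ (x + a₁ + a₃) ⬝ᵥ (y + b₁ + b₃) +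
        φ (x + a₂ + a₃) ⬝ᵥ (y + b₂ + b₃) - φ (x + a₁ + a₂ + a₃) ⬝ᵥ (y + b₁ + b₂ + b₃)) := by
    simp only [gowersCube, hf', star_mul', hind, hψ, Prod.mk_add_mk, AddChar.map_sub_eq_div,
      AddChar.map_add_eq_mul]
    ring
  rw [hcube]
  by_cases h0 : gowersCube ind x a₁ a₂ a₃ = 0
  · rw [h0, zero_mul]
  · rw [hφ.alternating_cube_dotProduct_eq_zero ?_, AddChar.map_zero_eq_one, mul_one]
    simpa [gowersCube, ind, hind, mul_ne_zero_iff, and_assoc] using h0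

end Freiman

theorem stmt0_general (n N : ℕ) (σ : ℝ)
    (S : Finset (Fin n → ZMod 2))
    (hcard : (S.card : ℝ) = σ * 2 ^ n)
    (φ : (Fin n → ZMod 2) → (Fin N → ZMod 2))
    (hφ : ∀ x₁ ∈ S, ∀ x₂ ∈ S, ∀ x₃ ∈ S, ∀ x₄ ∈ S,
      x₁ + x₂ = x₃ + x₄ → φ x₁ + φ x₂ = φ x₃ + φ x₄)
    (f : (Fin n → ZMod 2) × (Fin N → ZMod 2) → ℂ)
    (hf : ∀ x y, f (x, y) = if x ∈ S then (-1 : ℂ) ^ (∑ i, φ x i * y i).val else 0) :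
    σ ≤ gowersU3 f := by
  have hφ' : IsAddFreimanHom 2 (S : Set (Fin n → ZMod 2)) Set.univ φ :=
    isAddFreimanHom_two.2 ⟨Set.mapsTo_univ _ _, by simpa using hφ⟩
  have hf' (x y) : f (x, y) = if x ∈ S then ZMod.stdAddChar (φ x ⬝ᵥ y) else 0 := by
    rw [hf, ZMod.stdAddChar_two_apply]
    rfl
  rw [gowersU3_prod_eq f _ (hφ'.gowersCube_eq ZMod.stdAddChar hf')]
  calc σ = (∑ x, if x ∈ S then (1 : ℝ) else 0) / card (Fin n → ZMod 2) := by
        simp [hcard]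
    _ ≤ _ := mean_le_gowersU3 _

theorem stmt0 (n N : ℕ) (σ : ℝ) (hσ0 : 0 < σ) (hσ1 : σ < 1 / 2)
    (S : Finset (Fin n → ZMod 2))
    (hcard : (S.card : ℝ) = σ * 2 ^ n)
    (φ : (Fin n → ZMod 2) → (Fin N → ZMod 2))
    (hφ : ∀ x₁ ∈ S, ∀ x₂ ∈ S, ∀ x₃ ∈ S, ∀ x₄ ∈ S,
      x₁ + x₂ = x₃ + x₄ → φ x₁ + φ x₂ = φ x₃ + φ x₄)
    (f : (Fin n → ZMod 2) × (Fin N → ZMod 2) → ℂ)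
    (hf : ∀ x y, f (x, y) = if x ∈ S then (-1 : ℂ) ^ (∑ i, φ x i * y i).val else 0) :
    σ ≤ gowersU3 f :=
  stmt0_general n N σ S hcard φ hφ f hf
end

section
/- Let M ≥ 1, let f : {1,…,M} → ℂ, let δ > 0, and let θ₁,…,θ_K ∈ ℝ/ℤ be δ-separated (i.e. ‖θᵢ − θⱼ‖_{ℝ/ℤ} ≥ δ for i ≠ j). Then ∑_{j=1}^K |∑_{y=1}^M f(y)·e(y·θⱼ)|² ≤ C·(M + δ⁻¹)·∑_{y=1}^M |f(y)|² for an absolute constant C, where e(t) := e^{2πit}. -/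
/-!
Gallagher's argument. For a `C¹` function `F`, comparing `F c` with `F t` for `t` in an interval
`J ∋ c` of length `δ` and averaging gives `F c ≤ δ⁻¹ ∫_J |F| + ∫_J |F'|`. Around `δ`-separated
points of `ℝ/ℤ`, reduced to `[0, 1)`, these intervals are disjoint, so for `1`-periodic `F` the sum
`∑ F(θⱼ)` is at most the integral of `δ⁻¹ |F| + |F'|` over two periods. Take `F = |S|²` for `S(t) = ∑ f(y) e(yt)`. Then `∫₀¹ |S|² = ∑ |f(y)|²`
(Parseval), and `|F'| ≤ 2 |S| |S'| ≤ A |S|² + A⁻¹ |S'|²` with `A = 2πM`; since `S'` has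
coefficients `2πiy f(y)`, Parseval again gives `∫₀¹ |F'| ≤ 2A ∑ |f(y)|²`.
-/

open Complex MeasureTheory Function Set
open scoped Real Interval ComplexConjugate

theorem Function.Periodic.deriv {𝕜 E : Type*} [NontriviallyNormedField 𝕜] [NormedAddCommGroup E]
    [NormedSpace 𝕜 E] {f : 𝕜 → E} {c : 𝕜} (h : Periodic f c) : Periodic (deriv f) c := by
  intro x
  rw [← deriv_comp_add_const, show (fun y => f (y + c)) = f from funext h]

theorem UnitAddCircle.norm_coe_sub_le_abs_fract_sub (a b : ℝ) :
    ‖((a - b : ℝ) : AddCircle (1 : ℝ))‖ ≤ |Int.fract a - Int.fract b| := by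
  rw [UnitAddCircle.norm_eq]
  refine (round_le (a - b) (⌊a⌋ - ⌊b⌋)).trans_eq ?_
  push_cast [Int.fract]
  congr 1
  ring

namespace LargeSieve

section Gallagher

variable {F : ℝ → ℝ}

theorem abs_sub_le_integral_abs_deriv (hF : ContDiff ℝ 1 F) {a b s t : ℝ} (hs : s ∈ Icc a b)
    (ht : t ∈ Icc a b) : |F s - F t| ≤ ∫ u in a..b, |deriv F u| := by
  have hcont : Continuous (deriv F) := hF.continuous_deriv le_rfl
  rw [← intervalIntegral.integral_eq_sub_of_hasDerivAt
    (fun u _ => ((hF.differentiable one_ne_zero) u).hasDerivAt) (hcont.intervalIntegrable t s)]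
  calc |∫ u in t..s, deriv F u| ≤ ∫ u in Ι t s, |deriv F u| := by
        simpa only [Real.norm_eq_abs] using
          intervalIntegral.norm_integral_le_integral_norm_uIoc (f := deriv F) (μ := volume)
    _ ≤ ∫ u in Ioc a b, |deriv F u| :=
        setIntegral_mono_set hcont.abs.integrableOn_Ioc
          (Filter.Eventually.of_forall fun _ => abs_nonneg _)
          (Ioc_subset_Ioc (le_min ht.1 hs.1) (max_le ht.2 hs.2)).eventuallyLE
    _ = ∫ u in a..b, |deriv F u| := (intervalIntegral.integral_of_le (ht.1.trans ht.2)).symm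

theorem le_setIntegral_Ioc (hF : ContDiff ℝ 1 F) {a b c : ℝ} (hab : a < b) (hc : c ∈ Icc a b) :
    F c ≤ ∫ t in Ioc a b, ((b - a)⁻¹ * |F t| + |deriv F t|) := by
  set V := ∫ u in a..b, |deriv F u|
  have hFcont : Continuous F := hF.continuous
  have hpos : 0 < b - a := sub_pos.2 hab
  have hint : ∫ t in a..b, F c ≤ ∫ t in a..b, (|F t| + V) := by
    refine intervalIntegral.integral_mono_on hab.le intervalIntegrable_const
      ((hFcont.abs.add continuous_const).intervalIntegrable a b) fun t ht => ?_
    have := abs_sub_le_integral_abs_deriv hF hc ht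
    linarith [le_abs_self (F t), abs_le.1 this]
  rw [intervalIntegral.integral_const, intervalIntegral.integral_add
    (hFcont.abs.intervalIntegrable a b) intervalIntegrable_const,
    intervalIntegral.integral_const, smul_eq_mul, smul_eq_mul] at hint
  rw [← intervalIntegral.integral_of_le hab.le, intervalIntegral.integral_add
    ((hFcont.abs.const_mul _).intervalIntegrable a b)
    ((hF.continuous_deriv le_rfl).abs.intervalIntegrable a b), intervalIntegral.integral_const_mul]
  rw [← mul_le_mul_iff_of_pos_left hpos, mul_add, ← mul_assoc, mul_inv_cancel₀ hpos.ne', one_mul]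
  exact hint

theorem sum_le_two_mul_integral (hF : ContDiff ℝ 1 F) (hper : Periodic F 1) {δ : ℝ} (hδ : 0 < δ)
    (hδ₁ : δ ≤ 1) {ι : Type*} [Fintype ι] {θ : ι → ℝ}
    (hsep : Pairwise fun i j => δ ≤ ‖((θ i - θ j : ℝ) : AddCircle (1 : ℝ))‖) :
    ∑ i, F (θ i) ≤ 2 * ∫ t in (0 : ℝ)..1, (δ⁻¹ * |F t| + |deriv F t|) := by
  set G : ℝ → ℝ := fun t => δ⁻¹ * |F t| + |deriv F t|
  have hGcont : Continuous G :=
    (hF.continuous.abs.const_mul _).add (hF.continuous_deriv le_rfl).abs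
  have hGper : Periodic G 1 := fun t => by simp only [G, hper t, hper.deriv t]
  set c : ι → ℝ := fun i => Int.fract (θ i)
  set I : ι → Set ℝ := fun i => Ioc (c i - δ / 2) (c i + δ / 2)
  have hFc (i : ι) : F (θ i) = F (c i) := by
    have h := hper.sub_int_mul_eq ⌊θ i⌋ (x := θ i)
    rw [mul_one] at h
    exact h.symm
  have hFI (i : ι) : F (c i) ≤ ∫ t in I i, G t := by
    have h := le_setIntegral_Ioc hF (a := c i - δ / 2) (b := c i + δ / 2) (c := c i)
      (by linarith) ⟨by linarith, by linarith⟩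
    rwa [show c i + δ / 2 - (c i - δ / 2) = δ by ring] at h
  have hdisj : Pairwise (Disjoint on I) := by
    intro i j hij
    refine Set.disjoint_left.2 fun x hxi hxj => ?_
    have hij' := (hsep hij).trans (UnitAddCircle.norm_coe_sub_le_abs_fract_sub (θ i) (θ j))
    simp only [I, mem_Ioc] at hxi hxj
    have : |c i - c j| < δ := abs_sub_lt_iff.2 ⟨by linarith, by linarith⟩
    linarith
  have hIsub : (⋃ i, I i) ⊆ Ioc (-(1 / 2)) (-(1 / 2) + (2 : ℤ) • (1 : ℝ)) := by
    refine iUnion_subset fun i => Ioc_subset_Ioc ?_ ?_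
    · linarith [Int.fract_nonneg (θ i)]
    · simp only [zsmul_eq_mul]
      linarith [Int.fract_lt_one (θ i)]
  calc ∑ i, F (θ i) = ∑ i, F (c i) := Finset.sum_congr rfl fun i _ => hFc i
    _ ≤ ∑ i, ∫ t in I i, G t := Finset.sum_le_sum fun i _ => hFI i
    _ = ∫ t in ⋃ i, I i, G t :=
        (integral_iUnion_fintype (fun _ => measurableSet_Ioc) hdisj
          fun _ => hGcont.integrableOn_Ioc).symm
    _ ≤ ∫ t in Ioc (-(1 / 2)) (-(1 / 2) + (2 : ℤ) • (1 : ℝ)), G t :=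
        setIntegral_mono_set hGcont.integrableOn_Ioc
          (Filter.Eventually.of_forall fun t => by positivity) hIsub.eventuallyLE
    _ = 2 * ∫ t in (0 : ℝ)..1, G t := by
        rw [← intervalIntegral.integral_of_le (by norm_num),
          hGper.intervalIntegral_add_zsmul_eq 2 _ (hGcont.intervalIntegrable ·  ·),
          hGper.intervalIntegral_add_eq _ 0, zero_add]
        norm_num

end Gallagher

section TrigPoly

noncomputable def trigPoly (s : Finset ℕ) (f : ℕ → ℂ) (t : ℝ) : ℂ :=
  ∑ y ∈ s, f y * exp (2 * π * I * y * t)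

variable (s : Finset ℕ) (f : ℕ → ℂ)

theorem hasDerivAt_trigPoly (t : ℝ) :
    HasDerivAt (trigPoly s f) (trigPoly s (fun y => 2 * π * I * y * f y) t) t := by
  unfold trigPoly
  refine HasDerivAt.fun_sum fun y _ => ?_
  have h := (((hasDerivAt_id (t : ℂ)).const_mul (2 * π * I * y)).cexp.comp_ofReal).const_mul (f y)
  exact h.congr_deriv (by simp only [id, mul_one]; ring)

theorem contDiff_trigPoly : ContDiff ℝ 1 (trigPoly s f) :=
  ContDiff.sum fun _ _ => contDiff_const.mul (contDiff_const.mul ofRealCLM.contDiff).cexp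

theorem trigPoly_periodic : Periodic (trigPoly s f) 1 := fun t => by
  refine Finset.sum_congr rfl fun y _ => ?_
  rw [ofReal_add, ofReal_one, mul_add, mul_one, exp_add,
    show 2 * π * I * y = y * (2 * π * I) by ring, exp_nat_mul_two_pi_mul_I, mul_one]

theorem integral_exp_mul_conj_exp (y z : ℕ) :
    ∫ t in (0 : ℝ)..1, exp (2 * π * I * y * t) * conj (exp (2 * π * I * z * t)) =
      if y = z then 1 else 0 := by
  have hexp (t : ℝ) : exp (2 * π * I * y * t) * conj (exp (2 * π * I * z * t)) =
      exp (2 * π * I * ((y : ℤ) - z : ℤ) * t) := by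
    rw [← exp_conj, ← exp_add]
    simp only [map_mul, conj_ofReal, conj_I, map_natCast, map_ofNat]
    push_cast
    congr 1
    ring
  simp_rw [hexp]
  split_ifs with h
  · simp [h]
  · have hne : (2 * π * I * ((y : ℤ) - z : ℤ) : ℂ) ≠ 0 := by
      simp [Real.pi_ne_zero, I_ne_zero, sub_eq_zero, h]
    rw [integral_exp_mul_complex hne, ofReal_one, mul_one, ofReal_zero, mul_zero, exp_zero,
      show 2 * π * I * ((y : ℤ) - z : ℤ) = ((y : ℤ) - z : ℤ) * (2 * π * I) by ring,
      exp_int_mul_two_pi_mul_I, sub_self, zero_div]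

theorem integral_norm_sq_trigPoly :
    ∫ t in (0 : ℝ)..1, ‖trigPoly s f t‖ ^ 2 = ∑ y ∈ s, ‖f y‖ ^ 2 := by
  have hcont (y z : ℕ) : Continuous
      (fun t : ℝ => f y * conj (f z) * (exp (2 * π * I * y * t) * conj (exp (2 * π * I * z * t)))) :=
    continuous_const.mul ((continuous_const.mul continuous_ofReal).cexp.mul
      (continuous_conj.comp (continuous_const.mul continuous_ofReal).cexp))
  apply ofReal_injective
  calc ((∫ t in (0 : ℝ)..1, ‖trigPoly s f t‖ ^ 2 : ℝ) : ℂ)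
      = ∫ t in (0 : ℝ)..1, trigPoly s f t * conj (trigPoly s f t) := by
        simp only [← intervalIntegral.integral_ofReal, ofReal_pow, mul_conj']
    _ = ∫ t in (0 : ℝ)..1, ∑ y ∈ s, ∑ z ∈ s,
          f y * conj (f z) * (exp (2 * π * I * y * t) * conj (exp (2 * π * I * z * t))) := by
        simp only [trigPoly, map_sum, map_mul, Finset.sum_mul_sum]
        congr! 4
        ring
    _ = ∑ y ∈ s, ∑ z ∈ s, f y * conj (f z) * if y = z then 1 else 0 := by
        rw [intervalIntegral.integral_finsetSum fun y _ =>
          (continuous_finsetSum _ fun z _ => hcont y z).intervalIntegrable _ _]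
        refine Finset.sum_congr rfl fun y _ => ?_
        rw [intervalIntegral.integral_finsetSum fun z _ => (hcont y z).intervalIntegrable _ _]
        simp only [intervalIntegral.integral_const_mul, integral_exp_mul_conj_exp]
    _ = ((∑ y ∈ s, ‖f y‖ ^ 2 : ℝ) : ℂ) := by
        simp [mul_conj']

theorem sum_norm_sq_trigPoly_le {N : ℕ} (hN : 0 < N) (hs : ∀ y ∈ s, y ≤ N) {δ : ℝ} (hδ : 0 < δ)
    (hδ₁ : δ ≤ 1) {ι : Type*} [Fintype ι] {θ : ι → ℝ}
    (hsep : Pairwise fun i j => δ ≤ ‖((θ i - θ j : ℝ) : AddCircle (1 : ℝ))‖) :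
    ∑ i, ‖trigPoly s f (θ i)‖ ^ 2 ≤ 2 * (δ⁻¹ + 4 * π * N) * ∑ y ∈ s, ‖f y‖ ^ 2 := by
  set S := trigPoly s f
  set S' := trigPoly s fun y => 2 * π * I * y * f y
  set A : ℝ := 2 * π * N
  have hA : 0 < A := by positivity
  have hF : ContDiff ℝ 1 fun t => ‖S t‖ ^ 2 := (contDiff_trigPoly s f).norm_sq ℝ
  have hderiv (t : ℝ) : deriv (fun t => ‖S t‖ ^ 2) t = 2 * inner ℝ (S t) (S' t) :=
    (hasDerivAt_trigPoly s f t).norm_sq.deriv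
  have hderiv_le (t : ℝ) : |deriv (fun t => ‖S t‖ ^ 2) t| ≤ A * ‖S t‖ ^ 2 + A⁻¹ * ‖S' t‖ ^ 2 := by
    rw [hderiv, abs_mul, abs_two]
    have := abs_real_inner_le_norm (S t) (S' t)
    have := mul_nonneg (inv_nonneg.2 hA.le) (sq_nonneg (A * ‖S t‖ - ‖S' t‖))
    have : A⁻¹ * A = 1 := inv_mul_cancel₀ hA.ne'
    nlinarith
  have hcoeff : ∑ y ∈ s, ‖2 * π * I * y * f y‖ ^ 2 ≤ A ^ 2 * ∑ y ∈ s, ‖f y‖ ^ 2 := by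
    rw [Finset.mul_sum]
    refine Finset.sum_le_sum fun y hy => ?_
    have hy : (y : ℝ) ≤ N := by exact_mod_cast hs y hy
    simp only [norm_mul, Complex.norm_two, norm_real, Real.norm_eq_abs, abs_of_pos Real.pi_pos,
      norm_I, Complex.norm_natCast, mul_one, mul_pow, A]
    gcongr
  have hSc : Continuous fun t => ‖S t‖ ^ 2 := hF.continuous
  have hS'c : Continuous fun t => ‖S' t‖ ^ 2 := ((contDiff_trigPoly s _).continuous).norm.pow 2
  calc ∑ i, ‖S (θ i)‖ ^ 2
      ≤ 2 * ∫ t in (0 : ℝ)..1, (δ⁻¹ * |‖S t‖ ^ 2| + |deriv (fun t => ‖S t‖ ^ 2) t|) :=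
        sum_le_two_mul_integral hF (fun t => by simp only [S, trigPoly_periodic s f t]) hδ hδ₁ hsep
    _ ≤ 2 * ∫ t in (0 : ℝ)..1, ((δ⁻¹ + A) * ‖S t‖ ^ 2 + A⁻¹ * ‖S' t‖ ^ 2) := by
        gcongr
        refine intervalIntegral.integral_mono_on zero_le_one ?_ ?_ fun t _ => ?_
        · exact ((hSc.abs.const_mul _).add (hF.continuous_deriv le_rfl).abs).intervalIntegrable _ _
        · exact ((hSc.const_mul _).add (hS'c.const_mul _)).intervalIntegrable _ _
        · rw [abs_of_nonneg (sq_nonneg _)]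
          linarith [hderiv_le t]
    _ = 2 * ((δ⁻¹ + A) * ∑ y ∈ s, ‖f y‖ ^ 2 + A⁻¹ * ∑ y ∈ s, ‖2 * π * I * y * f y‖ ^ 2) := by
        rw [intervalIntegral.integral_add ((hSc.const_mul _).intervalIntegrable _ _)
          ((hS'c.const_mul _).intervalIntegrable _ _), intervalIntegral.integral_const_mul,
          intervalIntegral.integral_const_mul, integral_norm_sq_trigPoly, integral_norm_sq_trigPoly]
    _ ≤ 2 * ((δ⁻¹ + A) * ∑ y ∈ s, ‖f y‖ ^ 2 + A⁻¹ * (A ^ 2 * ∑ y ∈ s, ‖f y‖ ^ 2)) := by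
        gcongr
    _ = 2 * (δ⁻¹ + 4 * π * N) * ∑ y ∈ s, ‖f y‖ ^ 2 := by
        field_simp
        ring

end TrigPoly

end LargeSieve

open Complex in
/-- the analytic large sieve inequality. -/
theorem stmt8 : ∃ C : ℝ, 0 < C ∧
    ∀ (M : ℕ), 1 ≤ M → ∀ (f : ℕ → ℂ) (δ : ℝ), 0 < δ →
    ∀ (K : ℕ) (θ : Fin K → ℝ),
      (∀ i j, i ≠ j → δ ≤ ‖((θ i - θ j : ℝ) : AddCircle (1 : ℝ))‖) →
      ∑ j : Fin K, ‖∑ y ∈ Finset.Icc 1 M, f y * Complex.exp (2 * Real.pi * I * y * θ j)‖ ^ 2 ≤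
        C * ((M : ℝ) + δ⁻¹) * ∑ y ∈ Finset.Icc 1 M, ‖f y‖ ^ 2 := by
  refine ⟨2 + 8 * Real.pi, by positivity, fun M hM f δ hδ K θ hsep => ?_⟩
  have hbound := LargeSieve.sum_norm_sq_trigPoly_le (Finset.Icc 1 M) f hM
    (fun y hy => (Finset.mem_Icc.1 hy).2) (lt_min hδ one_pos) (min_le_right δ 1)
    fun i j hij => (min_le_left δ 1).trans (hsep i j hij)
  refine hbound.trans (mul_le_mul_of_nonneg_right ?_ (Finset.sum_nonneg fun _ _ => by positivity))
  have hmin : (min δ 1)⁻¹ ≤ δ⁻¹ + 1 := by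
    rcases min_cases δ 1 with ⟨h, _⟩ | ⟨h, _⟩ <;> rw [h] <;> simp [inv_nonneg.2 hδ.le]
  have hM' : (1 : ℝ) ≤ M := by exact_mod_cast hM
  nlinarith [Real.pi_pos, inv_pos.2 hδ]
end

section
/- Let 𝔽 = 𝔽₅. Let x ↦ Q_x be a linear map from 𝔽ⁿ to the space of homogeneous quadratic forms on 𝔽^N. Suppose (x₁,x₂,x₃,x₄) ∈ (𝔽ⁿ)⁴ satisfies x₁+x₂ = x₃+x₄ and is 'good', meaning V_{x_i} ∩ (V_{x_j} + V_{x_k}) = {0} for all distinct i,j,k ∈ {1,2,3,4}, where V_x is the minimal subspace such that Q_x(y) depends only on the inner products ⟨v,y⟩ for v ∈ V_x. Then Q_{x₁} = 0. -/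
/-!
For a symmetric matrix `A`, `ker A` is the dot-product orthogonal of `range A`, hence
`range A = (ker A)ᗮ`. If `range A` and `range B` meet trivially, `ker (A + B) = ker A ⊓ ker B`,
and taking orthogonals gives `range (A + B) = range A ⊔ range B`. Applied to
`Q x₁ + Q x₂ = Q x₃ + Q x₄` this yields `V₁ ⊔ V₂ = V₃ ⊔ V₄`, so `V₁ ≤ V₃ ⊔ V₄`, while goodness
says `V₁ ⊓ (V₃ ⊔ V₄) = ⊥`; hence `V₁ = ⊥` and `Q x₁ = 0`.
-/

open Matrix
open LinearMap (ker range)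

theorem LinearMap.ker_add_of_disjoint_range {R M N : Type*} [Ring R] [AddCommGroup M]
    [Module R M] [AddCommGroup N] [Module R N] {f g : M →ₗ[R] N}
    (h : Disjoint (range f) (range g)) : ker (f + g) = ker f ⊓ ker g := by
  refine le_antisymm (fun x hx => ?_) (fun x ⟨hf, hg⟩ => by simp_all)
  have hfg : f x = -g x := eq_neg_of_add_eq_zero_left hx
  have hf : f x = 0 := Submodule.disjoint_def.mp h _ ⟨x, rfl⟩ (hfg ▸ neg_mem ⟨x, rfl⟩)
  exact ⟨hf, by simpa [hf] using hfg.symm⟩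

theorem LinearMap.BilinForm.orthogonal_sup {R M : Type*} [CommSemiring R] [AddCommMonoid M]
    [Module R M] (B : LinearMap.BilinForm R M) (U W : Submodule R M) :
    B.orthogonal (U ⊔ W) = B.orthogonal U ⊓ B.orthogonal W := by
  refine le_antisymm (le_inf (orthogonal_le le_sup_left) (orthogonal_le le_sup_right)) ?_
  rintro x ⟨hU, hW⟩ v hv
  obtain ⟨u, hu, w, hw, rfl⟩ := Submodule.mem_sup.mp hv
  simp [hU u hu, hW w hw]

variable {K ι : Type*} [Field K] [Fintype ι]

theorem Matrix.dotProductBilin_isRefl :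
    LinearMap.BilinForm.IsRefl (dotProductBilin K K : LinearMap.BilinForm K (ι → K)) :=
  fun x y h => by simpa [dotProduct_comm] using h

theorem Matrix.dotProductBilin_nondegenerate :
    (dotProductBilin K K : LinearMap.BilinForm K (ι → K)).Nondegenerate :=
  ⟨fun x h => dotProduct_eq_zero x h,
    fun y h => dotProduct_eq_zero y fun x => by simpa [dotProduct_comm] using h x⟩

theorem Matrix.orthogonal_orthogonal_dotProductBilin (W : Submodule K (ι → K)) :
    LinearMap.BilinForm.orthogonal (dotProductBilin K K)
      (LinearMap.BilinForm.orthogonal (dotProductBilin K K) W) = W :=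
  LinearMap.BilinForm.orthogonal_orthogonal dotProductBilin_nondegenerate
    dotProductBilin_isRefl W

theorem Matrix.IsSymm.mulVec_dotProduct_comm {A : Matrix ι ι K} (hA : A.IsSymm) (x y : ι → K) :
    A *ᵥ x ⬝ᵥ y = A *ᵥ y ⬝ᵥ x := by
  rw [dotProduct_comm, dotProduct_mulVec, ← mulVec_transpose, hA.eq]

theorem Matrix.IsSymm.ker_mulVecLin_eq_orthogonal_range {A : Matrix ι ι K} (hA : A.IsSymm) :
    ker A.mulVecLin =
      LinearMap.BilinForm.orthogonal (dotProductBilin K K) (range A.mulVecLin) := by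
  ext y
  simp only [LinearMap.mem_ker, mulVecLin_apply, LinearMap.BilinForm.mem_orthogonal_iff,
    LinearMap.mem_range, forall_exists_index, forall_apply_eq_imp_iff,
    dotProductBilin_apply_apply, hA.mulVec_dotProduct_comm _ y, dotProduct_eq_zero_iff]

theorem Matrix.IsSymm.range_mulVecLin_eq_orthogonal_ker {A : Matrix ι ι K} (hA : A.IsSymm) :
    range A.mulVecLin =
      LinearMap.BilinForm.orthogonal (dotProductBilin K K) (ker A.mulVecLin) := by
  rw [hA.ker_mulVecLin_eq_orthogonal_range, orthogonal_orthogonal_dotProductBilin]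

theorem Matrix.IsSymm.range_mulVecLin_add {A B : Matrix ι ι K} (hA : A.IsSymm) (hB : B.IsSymm)
    (h : Disjoint (range A.mulVecLin) (range B.mulVecLin)) :
    range (A + B).mulVecLin = range A.mulVecLin ⊔ range B.mulVecLin := by
  have hAB : (A + B).IsSymm := hA.add hB
  rw [hAB.range_mulVecLin_eq_orthogonal_ker, mulVecLin_add,
    LinearMap.ker_add_of_disjoint_range h, hA.ker_mulVecLin_eq_orthogonal_range,
    hB.ker_mulVecLin_eq_orthogonal_range, ← LinearMap.BilinForm.orthogonal_sup,
    orthogonal_orthogonal_dotProductBilin]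

/-- a good additive quadruple forces vanishing of the quadratic form. -/
theorem stmt11 (n N : ℕ)
    (Q : (Fin n → ZMod 5) →ₗ[ZMod 5] Matrix (Fin N) (Fin N) (ZMod 5))
    (hsymm : ∀ x, (Q x).IsSymm)
    (X : Fin 4 → (Fin n → ZMod 5))
    (hadd : X 0 + X 1 = X 2 + X 3)
    (hgood : ∀ i j k : Fin 4, i ≠ j → i ≠ k → j ≠ k →
      LinearMap.range (Q (X i)).mulVecLin ⊓
        (LinearMap.range (Q (X j)).mulVecLin ⊔ LinearMap.range (Q (X k)).mulVecLin) = ⊥) :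
    Q (X 0) = 0 := by
  have : Fact (Nat.Prime 5) := ⟨by norm_num⟩
  have hdisj : ∀ i j k : Fin 4, i ≠ j → i ≠ k → j ≠ k →
      Disjoint (range (Q (X i)).mulVecLin) (range (Q (X j)).mulVecLin) :=
    fun i j k hij hik hjk => (disjoint_iff.mpr (hgood i j k hij hik hjk)).mono_right le_sup_left
  have hsup : range (Q (X 0)).mulVecLin ⊔ range (Q (X 1)).mulVecLin
      = range (Q (X 2)).mulVecLin ⊔ range (Q (X 3)).mulVecLin := by
    rw [← (hsymm _).range_mulVecLin_add (hsymm _) (hdisj 0 1 2 (by decide) (by decide) (by decide)),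
      ← (hsymm _).range_mulVecLin_add (hsymm _) (hdisj 2 3 0 (by decide) (by decide) (by decide)),
      ← map_add, ← map_add, hadd]
  have hrange : range (Q (X 0)).mulVecLin = ⊥ := by
    rw [← le_bot_iff, ← hgood 0 2 3 (by decide) (by decide) (by decide)]
    exact le_inf le_rfl (hsup ▸ le_sup_left)
  exact Matrix.toLin'.map_eq_zero_iff.mp (by rwa [Matrix.toLin'_apply', ← LinearMap.range_eq_bot])
end

section
/- Let N, M ≥ 1 be integers, S ⊆ {1,…,N} with |S| ≥ σN, and let φ : S → ℤ/Mℤ be a Freiman homomorphism. Define f : ℤ/4NMℤ → ℂ by f(x + 4Ny) := 1_S(x)·e^{2πi·φ(x)·y/M} for x ∈ {1,…,N}, y ∈ ℤ/Mℤ, and f := 0 otherwise. Then ‖f‖_{U³(ℤ/4NMℤ)} ≥ σ/4. -/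
open Finset ComplexConjugate
open scoped ComplexOrder

section GowersU3

variable {G : Type*} [AddCommGroup G]

def cubeProduct (f : G → ℂ) (x h₁ h₂ h₃ : G) : ℂ :=
  f x * conj (f (x + h₁)) * conj (f (x + h₂)) * conj (f (x + h₃)) * f (x + h₁ + h₂) *
    f (x + h₁ + h₃) * f (x + h₂ + h₃) * conj (f (x + h₁ + h₂ + h₃))

def mulShift (F : G → ℝ) (h x : G) : ℝ := F x * F (x + h)

lemma norm_cubeProduct (f : G → ℂ) (x h₁ h₂ h₃ : G) :
    ‖cubeProduct f x h₁ h₂ h₃‖ = mulShift (mulShift (mulShift (‖f ·‖) h₁) h₂) h₃ x := by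
  simp only [cubeProduct, mulShift, norm_mul, Complex.norm_conj, add_right_comm _ h₃ h₂,
    add_right_comm _ h₃ h₁, add_right_comm _ h₂ h₁]
  ring

variable [Fintype G]

lemma gowersU3_eq (f : G → ℂ) : gowersU3 f =
    ((∑ x, ∑ h₁, ∑ h₂, ∑ h₃, cubeProduct f x h₁ h₂ h₃).re / Fintype.card G ^ 4) ^ (8⁻¹ : ℝ) := rfl

lemma sq_sum_eq_sum_sum_mulShift (F : G → ℝ) : (∑ x, F x) ^ 2 = ∑ h, ∑ x, mulShift F h x := by
  rw [sq, Fintype.sum_mul_sum, eq_comm, sum_comm]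
  exact sum_congr rfl fun x _ => Fintype.sum_equiv (Equiv.addLeft x) _ _ fun _ => rfl

lemma sq_sum_le_card_mul_sum_sum_mulShift {ι : Type*} [Fintype ι] (F : ι → G → ℝ) :
    (∑ i, ∑ x, F i x) ^ 2 ≤ Fintype.card ι * ∑ i, ∑ h, ∑ x, mulShift (F i) h x := by
  simpa only [card_univ, sq_sum_eq_sum_sum_mulShift] using
    sq_sum_le_card_mul_sum_sq (s := univ) (f := fun i => ∑ x, F i x)

lemma sum_pow_eight_le (g : G → ℝ) : (∑ x, g x) ^ 8 ≤
    Fintype.card G ^ 4 * ∑ h₁, ∑ h₂, ∑ h₃, ∑ x, mulShift (mulShift (mulShift g h₁) h₂) h₃ x := by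
  have h₄ : (∑ x, g x) ^ 4 ≤ Fintype.card G * ∑ h₁, ∑ h₂, ∑ x, mulShift (mulShift g h₁) h₂ x := by
    rw [show 4 = 2 * 2 by rfl, pow_mul, sq_sum_eq_sum_sum_mulShift]
    exact sq_sum_le_card_mul_sum_sum_mulShift _
  have h₈ := sq_sum_le_card_mul_sum_sum_mulShift
    fun p : G × G => mulShift (mulShift g p.1) p.2
  simp only [Fintype.sum_prod_type, Fintype.card_prod] at h₈
  calc (∑ x, g x) ^ 8 = ((∑ x, g x) ^ 4) ^ 2 := by ring
    _ ≤ (Fintype.card G * ∑ h₁, ∑ h₂, ∑ x, mulShift (mulShift g h₁) h₂ x) ^ 2 :=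
        pow_le_pow_left₀ (by positivity) h₄ 2
    _ = Fintype.card G ^ 2 * (∑ h₁, ∑ h₂, ∑ x, mulShift (mulShift g h₁) h₂ x) ^ 2 := mul_pow ..
    _ ≤ Fintype.card G ^ 2 * (↑(Fintype.card G * Fintype.card G) *
          ∑ h₁, ∑ h₂, ∑ h₃, ∑ x, mulShift (mulShift (mulShift g h₁) h₂) h₃ x) := by gcongr
    _ = _ := by push_cast; ring

lemma mean_norm_le_gowersU3 (f : G → ℂ) (hf : ∀ x h₁ h₂ h₃, 0 ≤ cubeProduct f x h₁ h₂ h₃) :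
    (∑ x, ‖f x‖) / Fintype.card G ≤ gowersU3 f := by
  have hK : (0 : ℝ) < Fintype.card G := by exact_mod_cast Fintype.card_pos
  have hre : (∑ x, ∑ h₁, ∑ h₂, ∑ h₃, cubeProduct f x h₁ h₂ h₃).re =
      ∑ h₁, ∑ h₂, ∑ h₃, ∑ x, mulShift (mulShift (mulShift (‖f ·‖) h₁) h₂) h₃ x := by
    simp only [Complex.re_sum, Complex.re_eq_norm.2 (hf _ _ _ _), norm_cubeProduct]
    rw [sum_comm]
    refine sum_congr rfl fun _ _ => ?_
    rw [sum_comm]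
    exact sum_congr rfl fun _ _ => sum_comm
  have hmain := sum_pow_eight_le (‖f ·‖)
  rw [gowersU3_eq, hre, Real.le_rpow_inv_iff_of_pos (by positivity) ?_ (by norm_num)]
  · rw [show (8 : ℝ) = (8 : ℕ) by norm_num, Real.rpow_natCast, div_pow,
      div_le_div_iff₀ (by positivity) (by positivity)]
    calc (∑ x, ‖f x‖) ^ 8 * Fintype.card G ^ 4
        ≤ (Fintype.card G ^ 4 * ∑ h₁, ∑ h₂, ∑ h₃, ∑ x,
            mulShift (mulShift (mulShift (‖f ·‖) h₁) h₂) h₃ x) * Fintype.card G ^ 4 := by gcongr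
      _ = _ := by ring
  · exact div_nonneg ((mul_nonneg_iff_of_pos_left (by positivity)).1
      (hmain.trans' (by positivity))) (by positivity)

end GowersU3

section CubeCancellation

variable {G R : Type*} [AddCommGroup G] [CommRing R] {A : Set G} {p q : G → R}

/-- Freiman 2-homomorphisms are affine along the cube, and the alternating sum over a 3-cube
annihilates products of two affine functions. -/
lemma cube_alternating_sum_mul_eq_zero (hp : IsAddFreimanHom 2 A Set.univ p)
    (hq : IsAddFreimanHom 2 A Set.univ q) {x h₁ h₂ h₃ : G}
    (h₀ : x ∈ A) (h₁A : x + h₁ ∈ A) (h₂A : x + h₂ ∈ A) (h₃A : x + h₃ ∈ A)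
    (h₁₂ : x + h₁ + h₂ ∈ A) (h₁₃ : x + h₁ + h₃ ∈ A) (h₂₃ : x + h₂ + h₃ ∈ A)
    (h₁₂₃ : x + h₁ + h₂ + h₃ ∈ A) :
    p x * q x - p (x + h₁) * q (x + h₁) - p (x + h₂) * q (x + h₂) - p (x + h₃) * q (x + h₃) +
      p (x + h₁ + h₂) * q (x + h₁ + h₂) + p (x + h₁ + h₃) * q (x + h₁ + h₃) +
      p (x + h₂ + h₃) * q (x + h₂ + h₃) - p (x + h₁ + h₂ + h₃) * q (x + h₁ + h₂ + h₃) = 0 := by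
  have face {r : G → R} (hr : IsAddFreimanHom 2 A Set.univ r) :
      r (x + h₁ + h₂) = r (x + h₁) + r (x + h₂) - r x ∧
      r (x + h₁ + h₃) = r (x + h₁) + r (x + h₃) - r x ∧
      r (x + h₂ + h₃) = r (x + h₂) + r (x + h₃) - r x ∧
      r (x + h₁ + h₂ + h₃) = r (x + h₁ + h₃) + r (x + h₂ + h₃) - r (x + h₃) := by
    refine ⟨?_, ?_, ?_, ?_⟩ <;> refine eq_sub_of_add_eq' (hr.add_eq_add ?_ ?_ ?_ ?_ ?_) <;>
      first | assumption | abel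
  obtain ⟨p₁₂, p₁₃, p₂₃, p₁₂₃⟩ := face hp
  obtain ⟨q₁₂, q₁₃, q₂₃, q₁₂₃⟩ := face hq
  rw [p₁₂₃, q₁₂₃, p₁₂, q₁₂, p₁₃, q₁₃, p₂₃, q₂₃]
  ring

lemma cubeProduct_indicator_eq_zero_or_one [Finite R] (ψ : AddChar R ℂ)
    (hp : IsAddFreimanHom 2 A Set.univ p) (hq : IsAddFreimanHom 2 A Set.univ q) (x h₁ h₂ h₃ : G) :
    cubeProduct (A.indicator fun v => ψ (p v * q v)) x h₁ h₂ h₃ = 0 ∨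
      cubeProduct (A.indicator fun v => ψ (p v * q v)) x h₁ h₂ h₃ = 1 := by
  by_cases hcube : x ∈ A ∧ x + h₁ ∈ A ∧ x + h₂ ∈ A ∧ x + h₃ ∈ A ∧ x + h₁ + h₂ ∈ A ∧
      x + h₁ + h₃ ∈ A ∧ x + h₂ + h₃ ∈ A ∧ x + h₁ + h₂ + h₃ ∈ A
  · obtain ⟨h₀, h₁A, h₂A, h₃A, h₁₂, h₁₃, h₂₃, h₁₂₃⟩ := hcube
    right
    simp only [cubeProduct, Set.indicator_of_mem, h₀, h₁A, h₂A, h₃A, h₁₂, h₁₃, h₂₃, h₁₂₃,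
      ← AddChar.map_neg_eq_conj, ← AddChar.map_add_eq_mul]
    rw [← AddChar.map_zero_eq_one ψ, ← cube_alternating_sum_mul_eq_zero hp hq h₀ h₁A h₂A h₃A h₁₂
      h₁₃ h₂₃ h₁₂₃]
    congr 1
    ring
  · left
    simp only [not_and_or] at hcube
    rcases hcube with h | h | h | h | h | h | h | h <;>
      simp [cubeProduct, Set.indicator_of_notMem h]

end CubeCancellation

/-- The digits of `v = x + n * y`, with the paper's representatives `x ∈ {1, …, n}` and
`y ∈ {0, …, m - 1}`. -/
def lowDigit (n m : ℕ) (v : ZMod (n * m)) : ℕ := (v - 1).val % n + 1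

def highDigit (n m : ℕ) (v : ZMod (n * m)) : ℕ := (v - 1).val / n

lemma ZMod.intCast_add_mul_eq_zero_iff {n m : ℕ} {d e : ℤ} (hd : |d| < n) :
    ((d + n * e : ℤ) : ZMod (n * m)) = 0 ↔ d = 0 ∧ (e : ZMod m) = 0 := by
  simp only [ZMod.intCast_zmod_eq_zero_iff_dvd, Nat.cast_mul]
  have hn : (n : ℤ) ≠ 0 := by have := abs_nonneg d; omega
  constructor
  · intro h
    have hd0 : d = 0 := Int.eq_zero_of_abs_lt_dvd
      ((dvd_add_left (dvd_mul_right _ e)).1 (dvd_of_mul_right_dvd h)) hd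
    subst hd0
    exact ⟨rfl, (Int.dvd_of_mul_dvd_mul_left hn (by simpa using h))⟩
  · rintro ⟨rfl, he⟩
    simpa using mul_dvd_mul_left (n : ℤ) he

section Digits

variable {n m : ℕ}

lemma val_natCast_add_mul_sub_one {a b : ℕ} (ha : 1 ≤ a) (han : a ≤ n) (hb : b < m) :
    ((a : ZMod (n * m)) + n * b - 1).val = a - 1 + n * b := by
  have hlt : a - 1 + n * b < n * m := by
    calc a - 1 + n * b < n * (b + 1) := by rw [mul_add]; omega
      _ ≤ n * m := Nat.mul_le_mul_left n hb
  rw [← ZMod.val_natCast_of_lt hlt]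
  push_cast [Nat.cast_sub ha]
  ring_nf

lemma lowDigit_natCast_add_mul {a b : ℕ} (ha : 1 ≤ a) (han : a ≤ n) (hb : b < m) :
    lowDigit n m (a + n * b) = a := by
  rw [lowDigit, val_natCast_add_mul_sub_one ha han hb, Nat.add_mul_mod_self_left,
    Nat.mod_eq_of_lt (by omega)]
  omega

lemma highDigit_natCast_add_mul {a b : ℕ} (ha : 1 ≤ a) (han : a ≤ n) (hb : b < m) :
    highDigit n m (a + n * b) = b := by
  rw [highDigit, val_natCast_add_mul_sub_one ha han hb, Nat.add_mul_div_left _ _ (by omega),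
    Nat.div_eq_of_lt (by omega), zero_add]

variable [NeZero (n * m)]

lemma lowDigit_le (v : ZMod (n * m)) : lowDigit n m v ≤ n :=
  Nat.mod_lt _ (Nat.pos_of_ne_zero (left_ne_zero_of_mul (NeZero.ne (n * m))))

lemma highDigit_lt (v : ZMod (n * m)) : highDigit n m v < m :=
  Nat.div_lt_of_lt_mul (ZMod.val_lt (v - 1))

lemma lowDigit_add_mul_highDigit (v : ZMod (n * m)) :
    (lowDigit n m v : ZMod (n * m)) + n * highDigit n m v = v := by
  have h : lowDigit n m v + n * highDigit n m v = (v - 1).val + 1 := by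
    have := Nat.mod_add_div (v - 1).val n
    unfold lowDigit highDigit; omega
  rw [← Nat.cast_mul, ← Nat.cast_add, h]
  simp

lemma digits_add_eq_of_add_eq {v₁ v₂ v₃ v₄ : ZMod (n * m)} (h : v₁ + v₂ = v₃ + v₄)
    (h₁ : 2 * lowDigit n m v₁ ≤ n) (h₂ : 2 * lowDigit n m v₂ ≤ n)
    (h₃ : 2 * lowDigit n m v₃ ≤ n) (h₄ : 2 * lowDigit n m v₄ ≤ n) :
    lowDigit n m v₁ + lowDigit n m v₂ = lowDigit n m v₃ + lowDigit n m v₄ ∧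
      (highDigit n m v₁ + highDigit n m v₂ : ZMod m) = highDigit n m v₃ + highDigit n m v₄ := by
  have hpos (v : ZMod (n * m)) : 1 ≤ lowDigit n m v := Nat.le_add_left 1 _
  have hd : |(lowDigit n m v₁ + lowDigit n m v₂ - lowDigit n m v₃ - lowDigit n m v₄ : ℤ)| < n := by
    have := hpos v₁; have := hpos v₂; have := hpos v₃; have := hpos v₄
    exact abs_lt.2 ⟨by omega, by omega⟩
  have hsum := (ZMod.intCast_add_mul_eq_zero_iff (m := m) (e := highDigit n m v₁ +
    highDigit n m v₂ - highDigit n m v₃ - highDigit n m v₄) hd).1 (by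
      rw [← lowDigit_add_mul_highDigit v₁, ← lowDigit_add_mul_highDigit v₂,
        ← lowDigit_add_mul_highDigit v₃, ← lowDigit_add_mul_highDigit v₄] at h
      push_cast
      linear_combination h)
  refine ⟨by omega, ?_⟩
  push_cast at hsum
  linear_combination hsum.2

lemma isAddFreimanHom_lowDigit :
    IsAddFreimanHom 2 {v : ZMod (n * m) | 2 * lowDigit n m v ≤ n} Set.univ (lowDigit n m) :=
  isAddFreimanHom_two.2 ⟨Set.mapsTo_univ _ _,
    fun _ h₁ _ h₂ _ h₃ _ h₄ h => (digits_add_eq_of_add_eq h h₁ h₂ h₃ h₄).1⟩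

lemma isAddFreimanHom_highDigit : IsAddFreimanHom 2 {v : ZMod (n * m) | 2 * lowDigit n m v ≤ n}
    Set.univ fun v => (highDigit n m v : ZMod m) :=
  isAddFreimanHom_two.2 ⟨Set.mapsTo_univ _ _,
    fun _ h₁ _ h₂ _ h₃ _ h₄ h => (digits_add_eq_of_add_eq h h₁ h₂ h₃ h₄).2⟩

lemma card_mul_le_card_lowDigit_mem {S : Finset ℕ} (hS : S ⊆ Icc 1 n) :
    #S * m ≤ #{v : ZMod (n * m) | lowDigit n m v ∈ S} := by
  set embed : ℕ × ℕ → ZMod (n * m) := fun p => p.1 + n * p.2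
  have hdigits : ∀ p ∈ S ×ˢ range m,
      lowDigit n m (embed p) = p.1 ∧ highDigit n m (embed p) = p.2 := by
    rintro ⟨a, b⟩ hab
    obtain ⟨ha, hb⟩ := mem_product.1 hab
    obtain ⟨ha₁, ha₂⟩ := mem_Icc.1 (hS ha)
    exact ⟨lowDigit_natCast_add_mul ha₁ ha₂ (mem_range.1 hb),
      highDigit_natCast_add_mul ha₁ ha₂ (mem_range.1 hb)⟩
  calc #S * m = #(S ×ˢ range m) := by simp
    _ ≤ _ := by
      refine card_le_card_of_injOn embed (fun p hp => ?_) (fun p hp p' hp' h => ?_)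
      · simpa [(hdigits p hp).1] using (mem_product.1 hp).1
      · rw [Prod.ext_iff, ← (hdigits p hp).1, ← (hdigits p hp).2, ← (hdigits p' hp').1,
          ← (hdigits p' hp').2, h]
        exact ⟨rfl, rfl⟩

end Digits

lemma ZMod.stdAddChar_mul_natCast {m : ℕ} [NeZero m] (c : ZMod m) (y : ℕ) :
    stdAddChar (c * (y : ZMod m)) =
      Complex.exp (2 * Real.pi * Complex.I * (c.val : ℂ) * y / m) := by
  rw [ZMod.stdAddChar_apply, ← ZMod.natCast_zmod_val c, ← Nat.cast_mul, ZMod.toCircle_natCast,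
    ZMod.val_natCast_of_lt (ZMod.val_lt c)]
  push_cast
  congr 1
  ring

lemma eq_indicator_stdAddChar {n m : ℕ} [NeZero (n * m)] [NeZero m] {S : Finset ℕ}
    {φ : ℕ → ZMod m} {f : ZMod (n * m) → ℂ}
    (hf : ∀ x y : ℕ, 1 ≤ x → x ≤ n → y < m → f (x + n * y) = if x ∈ S then
      Complex.exp (2 * Real.pi * Complex.I * ((φ x).val : ℂ) * (y : ℂ) / (m : ℂ)) else 0) :
    f = {v | lowDigit n m v ∈ S}.indicator
      fun v => ZMod.stdAddChar (φ (lowDigit n m v) * (highDigit n m v : ZMod m)) := by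
  funext v
  have hv := hf (lowDigit n m v) (highDigit n m v) (Nat.le_add_left 1 _) (lowDigit_le v)
    (highDigit_lt v)
  rw [lowDigit_add_mul_highDigit] at hv
  rw [hv, Set.indicator_apply, ZMod.stdAddChar_mul_natCast]
  rfl

theorem stmt14_general (N M : ℕ) [NeZero (4 * N * M)] (σ : ℝ)
    (S : Finset ℕ) (hS : S ⊆ Finset.Icc 1 N) (hcard : σ * N ≤ (S.card : ℝ))
    (φ : ℕ → ZMod M)
    (hφ : ∀ x₁ ∈ S, ∀ x₂ ∈ S, ∀ x₃ ∈ S, ∀ x₄ ∈ S,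
      x₁ + x₂ = x₃ + x₄ → φ x₁ + φ x₂ = φ x₃ + φ x₄)
    (f : ZMod (4 * N * M) → ℂ)
    (hf : ∀ x y : ℕ, 1 ≤ x → x ≤ 4 * N → y < M →
      f ((x : ZMod (4 * N * M)) + 4 * N * (y : ZMod (4 * N * M))) =
        if x ∈ S then
          Complex.exp (2 * Real.pi * Complex.I * ((φ x).val : ℂ) * (y : ℂ) / (M : ℂ))
        else 0) :
    σ / 4 ≤ gowersU3 f := by
  have : NeZero M := ⟨right_ne_zero_of_mul (NeZero.ne (4 * N * M))⟩
  have hfA := eq_indicator_stdAddChar (n := 4 * N) (S := S) (φ := φ)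
    fun x y h₁ h₂ h₃ => by push_cast; exact hf x y h₁ h₂ h₃
  have hhalf : {v | lowDigit (4 * N) M v ∈ S} ⊆ {v | 2 * lowDigit (4 * N) M v ≤ 4 * N} :=
    fun v hv => by have := (mem_Icc.1 (hS hv)).2; simp only [Set.mem_ofPred_eq]; omega
  have hp : IsAddFreimanHom 2 {v | lowDigit (4 * N) M v ∈ S} Set.univ (φ ∘ lowDigit (4 * N) M) :=
    (isAddFreimanHom_two.2 ⟨Set.mapsTo_univ _ _, hφ⟩).comp
      (isAddFreimanHom_lowDigit.subset hhalf fun _ hv => hv)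
  have hmean := mean_norm_le_gowersU3 f fun x h₁ h₂ h₃ => by
    rcases cubeProduct_indicator_eq_zero_or_one ZMod.stdAddChar hp
      (isAddFreimanHom_highDigit.subset hhalf (Set.mapsTo_univ _ _)) x h₁ h₂ h₃ with h | h <;>
      rw [hfA] <;> simp only [Function.comp_apply] at h <;> simp [h]
  have hsum : ((#S * M : ℕ) : ℝ) ≤ ∑ v, ‖f v‖ := by
    rw [hfA]
    simp only [Set.indicator_apply, Set.mem_ofPred_eq, apply_ite, AddChar.norm_apply, norm_zero,
      sum_boole]
    exact_mod_cast card_mul_le_card_lowDigit_mem (n := 4 * N)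
      (hS.trans (Icc_subset_Icc_right (by omega)))
  calc σ / 4 ≤ ((#S * M : ℕ) : ℝ) / Fintype.card (ZMod (4 * N * M)) := by
        rw [ZMod.card, le_div_iff₀ (Nat.cast_pos.2 (NeZero.pos _))]
        push_cast
        linarith [mul_le_mul_of_nonneg_right hcard (Nat.cast_nonneg (α := ℝ) M)]
    _ ≤ (∑ v, ‖f v‖) / Fintype.card (ZMod (4 * N * M)) := by gcongr
    _ ≤ gowersU3 f := hmean

theorem stmt14 (N M : ℕ) (hN : 1 ≤ N) (hM : 1 ≤ M) [NeZero (4 * N * M)] (σ : ℝ)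
    (S : Finset ℕ) (hS : S ⊆ Finset.Icc 1 N) (hcard : σ * N ≤ (S.card : ℝ))
    (φ : ℕ → ZMod M)
    (hφ : ∀ x₁ ∈ S, ∀ x₂ ∈ S, ∀ x₃ ∈ S, ∀ x₄ ∈ S,
      x₁ + x₂ = x₃ + x₄ → φ x₁ + φ x₂ = φ x₃ + φ x₄)
    (f : ZMod (4 * N * M) → ℂ)
    (hf : ∀ x y : ℕ, 1 ≤ x → x ≤ 4 * N → y < M →
      f ((x : ZMod (4 * N * M)) + 4 * N * (y : ZMod (4 * N * M))) =
        if x ∈ S then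
          Complex.exp (2 * Real.pi * Complex.I * ((φ x).val : ℂ) * (y : ℂ) / (M : ℂ))
        else 0) :
    σ / 4 ≤ gowersU3 f :=
  stmt14_general N M σ S hS hcard φ hφ f hf
end

section
/- Let N be odd and let φ : ℤ/Nℤ → ℝ/ℤ be a quadratic polynomial, meaning Δ_{h₁}Δ_{h₂}Δ_{h₃}φ(x) = 0 for all x,h₁,h₂,h₃ ∈ ℤ/Nℤ. Then there exist a,b ∈ ℤ/Nℤ and c ∈ ℝ/ℤ such that φ(x) = ι(ax² + bx) + c for all x, where ι : ℤ/Nℤ → ℝ/ℤ is the embedding ι(m) = m/N mod 1. -/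
noncomputable def iotaHom (N : ℕ) : ZMod N →+ AddCircle (1 : ℝ) :=
  ZMod.lift N ⟨(QuotientAddGroup.mk' (AddSubgroup.zmultiples (1:ℝ))).comp
      (zmultiplesHom ℝ ((N:ℝ)⁻¹)), by
    simp only [AddMonoidHom.comp_apply, zmultiplesHom_apply]
    rcases eq_or_ne (N:ℝ) 0 with h | h
    · simp [h]
    · have : (N:ℤ) • (N:ℝ)⁻¹ = 1 := by
        rw [zsmul_eq_mul]; push_cast; exact mul_inv_cancel₀ h
      rw [this]
      exact AddCircle.coe_period 1⟩

lemma iotaHom_intCast (N : ℕ) (k : ℤ) :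
    iotaHom N ((k : ℤ) : ZMod N) = (((k : ℝ) * (N:ℝ)⁻¹ : ℝ) : AddCircle (1:ℝ)) := by
  simp [iotaHom, zsmul_eq_mul]

lemma iotaHom_apply (N : ℕ) [NeZero N] (m : ZMod N) :
    iotaHom N m = (((m.val : ℝ) / (N:ℝ) : ℝ) : AddCircle (1:ℝ)) := by
  have h : ((m.val : ℤ) : ZMod N) = m := by push_cast [ZMod.natCast_val]; simp
  rw [← h, iotaHom_intCast]
  norm_num [div_eq_mul_inv]

lemma tors (N : ℕ) [NeZero N] (z : AddCircle (1:ℝ)) (hz : N • z = 0) :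
    ∃ m : ZMod N, z = iotaHom N m := by
  obtain ⟨r, rfl⟩ := QuotientAddGroup.mk_surjective z
  rw [show (QuotientAddGroup.mk r : AddCircle (1:ℝ)) = (r : AddCircle (1:ℝ)) from rfl,
    ← AddCircle.coe_nsmul, AddCircle.coe_eq_zero_iff] at hz
  obtain ⟨k, hk⟩ := hz
  refine ⟨((k : ℤ) : ZMod N), ?_⟩
  rw [iotaHom_intCast]
  have hr : r = (k : ℝ) * (N : ℝ)⁻¹ := by
    have hN : (N : ℝ) ≠ 0 := Nat.cast_ne_zero.mpr (NeZero.ne N)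
    field_simp
    rw [mul_comm]
    simpa [zsmul_eq_mul, nsmul_eq_mul] using hk.symm
  rw [hr]

section
variable {N : ℕ} (φ : ZMod N → AddCircle (1:ℝ))

/-- second difference at 0 -/
noncomputable def Bfun (k h : ZMod N) : AddCircle (1:ℝ) := φ (h + k) - φ h - φ k + φ 0

lemma Bfun_def (k h : ZMod N) : Bfun φ k h = φ (h + k) - φ h - φ k + φ 0 := rfl

variable (hφ : ∀ x h₁ h₂ h₃ : ZMod N,
      φ (x + h₁ + h₂ + h₃) - φ (x + h₁ + h₂) - φ (x + h₁ + h₃) - φ (x + h₂ + h₃)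
        + φ (x + h₁) + φ (x + h₂) + φ (x + h₃) - φ x = 0)

include hφ in
lemma keyB (x h k : ZMod N) :
    φ (x + h + k) - φ (x + h) - φ (x + k) + φ x = Bfun φ k h := by
  have h0 := hφ 0 h k x
  simp only [zero_add] at h0
  unfold Bfun
  rw [show x + h + k = h + k + x by ring, show x + h = h + x by ring,
    show x + k = k + x by ring, ← sub_eq_zero, ← h0]
  abel

include hφ in
lemma Badd (k h h' : ZMod N) : Bfun φ k (h + h') = Bfun φ k h + Bfun φ k h' := by
  have k1 := keyB φ hφ h' h k
  unfold Bfun at *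
  rw [show h + h' + k = h' + h + k by ring, show h + h' = h' + h by ring, ← sub_eq_zero,
    ← sub_eq_zero.2 k1]
  abel

lemma Bsymm (k h : ZMod N) : Bfun φ k h = Bfun φ h k := by
  unfold Bfun; rw [add_comm h k]; abel

/-- packaged as hom in h -/
noncomputable def Bhom (k : ZMod N) : ZMod N →+ AddCircle (1:ℝ) :=
  AddMonoidHom.mk' (Bfun φ k) (Badd φ hφ k)

end

/-- quadratic polynomials on Z/NZ with values in R/Z, N odd. -/
theorem stmt17 (N : ℕ) (hN : Odd N) (φ : ZMod N → AddCircle (1 : ℝ))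
    (hφ : ∀ x h₁ h₂ h₃ : ZMod N,
      φ (x + h₁ + h₂ + h₃) - φ (x + h₁ + h₂) - φ (x + h₁ + h₃) - φ (x + h₂ + h₃)
        + φ (x + h₁) + φ (x + h₂) + φ (x + h₃) - φ x = 0) :
    ∃ (a b : ZMod N) (c : AddCircle (1 : ℝ)), ∀ x : ZMod N,
      φ x = ((((a * x ^ 2 + b * x).val : ℝ) / (N : ℝ) : ℝ) : AddCircle (1 : ℝ)) + c := by
  haveI : NeZero N := ⟨hN.pos.ne'⟩
  set ι := iotaHom N with hι
  -- every element of ZMod N is val • 1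
  have hval : ∀ h : ZMod N, h = h.val • (1 : ZMod N) := by
    intro h
    rw [nsmul_eq_mul, mul_one]
    simp [ZMod.natCast_val, ZMod.cast_id]
  have hom_val : ∀ (f : ZMod N →+ AddCircle (1:ℝ)) (h : ZMod N), f h = h.val • f 1 := by
    intro f h
    conv_lhs => rw [hval h]
    exact map_nsmul f _ _
  have hom_tors : ∀ (f : ZMod N →+ AddCircle (1:ℝ)), N • f 1 = 0 := by
    intro f
    rw [← map_nsmul, nsmul_eq_mul, mul_one, ZMod.natCast_self, map_zero]
  -- B in terms of B 1 1
  have hB : ∀ h k : ZMod N, Bfun φ k h = h.val • k.val • Bfun φ 1 1 := by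
    intro h k
    have h1 : Bfun φ k h = Bhom φ hφ k h := rfl
    rw [h1, hom_val (Bhom φ hφ k) h]
    have h2 : Bhom φ hφ k 1 = Bfun φ 1 k := Bsymm φ k 1
    rw [h2, show Bfun φ 1 k = Bhom φ hφ 1 k from rfl, hom_val (Bhom φ hφ 1) k]
    rfl
  -- torsion of B 1 1
  have hBtors : N • Bfun φ 1 1 = 0 := hom_tors (Bhom φ hφ 1)
  obtain ⟨e, he⟩ := tors N _ hBtors
  -- 2 is a unit
  have u2 : IsUnit (2 : ZMod N) := by
    have : ((2 : ℕ) : ZMod N) = (2 : ZMod N) := by norm_num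
    rw [← this, ZMod.isUnit_iff_coprime]
    exact hN.coprime_two_left
  set a : ZMod N := ↑u2.unit⁻¹ * e with ha
  have h2a : 2 * a = e := by
    have h12 : (u2.unit : ZMod N) * ↑u2.unit⁻¹ = 1 := u2.unit.mul_inv
    rw [u2.unit_spec] at h12
    rw [ha, ← mul_assoc, h12, one_mul]
  -- B in terms of ι
  have hBe : ∀ h k : ZMod N, Bfun φ k h = ι (h * k * e) := by
    intro h k
    rw [hB h k, he, ← map_nsmul, ← map_nsmul]
    congr 1
    rw [nsmul_eq_mul, nsmul_eq_mul]
    simp only [ZMod.natCast_val, ZMod.cast_id]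
    ring
  -- the linear-part function
  set ψ : ZMod N → AddCircle (1:ℝ) := fun x => φ x - φ 0 - ι (a * x ^ 2) with hψ
  have ψadd : ∀ x y : ZMod N, ψ (x + y) = ψ x + ψ y := by
    intro x y
    have hring : a * (x + y) ^ 2 = a * x ^ 2 + (a * y ^ 2 + x * y * e) := by
      rw [← h2a]; ring
    have hψxy : ψ (x + y) = φ (x + y) - φ 0 - ι (a * (x + y) ^ 2) := rfl
    rw [hψxy, hring, map_add, map_add, ← hBe x y, Bfun_def]
    show _ = (φ x - φ 0 - ι (a * x ^ 2)) + (φ y - φ 0 - ι (a * y ^ 2))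
    abel
  set ψhom : ZMod N →+ AddCircle (1:ℝ) := AddMonoidHom.mk' ψ ψadd with hψhom
  have hψtors : N • ψ 1 = 0 := hom_tors ψhom
  obtain ⟨b, hb⟩ := tors N _ hψtors
  have hψx : ∀ x : ZMod N, ψ x = ι (b * x) := by
    intro x
    have h1 : ψ x = ψhom x := rfl
    rw [h1, hom_val ψhom x]
    show x.val • ψ 1 = _
    rw [hb, ← map_nsmul]
    congr 1
    rw [nsmul_eq_mul]
    simp only [ZMod.natCast_val, ZMod.cast_id]
    ring
  refine ⟨a, b, φ 0, fun x => ?_⟩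
  rw [← iotaHom_apply, ← hι, map_add]
  have h1 : ψ x = φ x - φ 0 - ι (a * x ^ 2) := rfl
  have h2 := hψx x
  rw [h1] at h2
  rw [show ι (b * x) = φ x - φ 0 - ι (a * x ^ 2) from h2.symm]
  abel
end
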